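/- arXiv:math-ph/0510017 — 2 statements merged into one kernel-verified Lean document; each statement's English description precedes it below -/
import Mathlib

section
/- The Volterra map Ψ: ℝ^{2(2n-1)} → (0,∞)^{2n-1}, Ψ(q,p)_i = exp(p_i + (1/2)(q_{i+1} - q_{i-1})) (with q_0 = q_{2n} = 0), is a Poisson map from the canonical symplectic bracket on ℝ^{2(2n-1)} to the quadratic bracket π_2 on ℝ^{2n-1} with {u_i, u_{i+1}} = u_i u_{i+1}. Concretely, for all i < j: Σ_k (∂u_i/∂q_k · ∂u_j/∂p_k - ∂u_i/∂p_k · ∂u_j/∂q_k) equals u_i u_{i+1} if j = i+1 and 0 if j > i+1. -/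
/-- The Volterra map component: `uᵢ(q,p) = exp(pᵢ + (1/2)(qᵢ₊₁ - qᵢ₋₁))`. -/
noncomputable def volterraU (q p : ℕ → ℝ) (i : ℕ) : ℝ :=
  Real.exp (p i + (q (i + 1) - q (i - 1)) / 2)

lemma volterra_derivP (q p : ℕ → ℝ) (i k : ℕ) :
    deriv (fun x => volterraU q (Function.update p k x) i) (p k)
      = if i = k then volterraU q p i else 0 := by
  unfold volterraU
  simp only [Function.update_apply]
  by_cases h : i = k
  · subst h
    simp only [if_true]
    have hd : HasDerivAt (fun x : ℝ => Real.exp (x + (q (i + 1) - q (i - 1)) / 2))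
        (Real.exp (p i + (q (i + 1) - q (i - 1)) / 2) * 1) (p i) :=
      ((hasDerivAt_id (p i)).add_const _).exp
    rw [hd.deriv, mul_one]
  · simp [h]

lemma volterra_derivQ (q p : ℕ → ℝ) (i k : ℕ) :
    deriv (fun x => volterraU (Function.update q k x) p i) (q k)
      = volterraU q p i *
          ((if i + 1 = k then (1:ℝ) else 0) - (if i - 1 = k then (1:ℝ) else 0)) / 2 := by
  unfold volterraU
  simp only [Function.update_apply]
  by_cases h1 : i + 1 = k
  · have h2 : ¬ (i - 1 = k) := by omega
    simp only [if_pos h1, if_neg h2]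
    have hd : HasDerivAt (fun x : ℝ => Real.exp (p i + (x - q (i - 1)) / 2))
        (Real.exp (p i + (q k - q (i - 1)) / 2) * ((1:ℝ) / 2)) (q k) := by
      have := ((((hasDerivAt_id (q k)).sub_const (q (i - 1))).div_const 2).const_add (p i)).exp
      simpa using this
    rw [hd.deriv, ← h1]
    ring
  · by_cases h2 : i - 1 = k
    · simp only [if_neg h1, if_pos h2]
      have hd : HasDerivAt (fun x : ℝ => Real.exp (p i + (q (i + 1) - x) / 2))
          (Real.exp (p i + (q (i + 1) - q k) / 2) * (-(1:ℝ) / 2)) (q k) := by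
        have := ((((hasDerivAt_id (q k)).const_sub (q (i + 1))).div_const 2).const_add (p i)).exp
        simpa using this
      rw [hd.deriv, ← h2]
      ring
    · simp [h1, h2]

/-- The Volterra map is a Poisson map from the canonical bracket on `ℝ^{2(2n-1)}` to
the quadratic bracket `π₂`: for `i < j`,
`∑ₖ (∂uᵢ/∂qₖ · ∂uⱼ/∂pₖ - ∂uᵢ/∂pₖ · ∂uⱼ/∂qₖ)` equals `uᵢuᵢ₊₁` if `j = i+1`
and `0` if `j > i+1`. (Conventions `q₀ = q_{2n} = 0`.) -/
theorem volterra_map_is_poisson (n : ℕ) (hn : 0 < n) (q p : ℕ → ℝ)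
    (hq0 : q 0 = 0) (hq2n : q (2 * n) = 0) :
    ∀ i ∈ Finset.Icc 1 (2 * n - 1), ∀ j ∈ Finset.Icc 1 (2 * n - 1), i < j →
      ∑ k ∈ Finset.Icc 1 (2 * n - 1),
          (deriv (fun x => volterraU (Function.update q k x) p i) (q k)
              * deriv (fun x => volterraU q (Function.update p k x) j) (p k)
            - deriv (fun x => volterraU q (Function.update p k x) i) (p k)
              * deriv (fun x => volterraU (Function.update q k x) p j) (q k))
        = if j = i + 1 then volterraU q p i * volterraU q p j else 0 := by
  intro i hi j hj hij
  simp only [Finset.mem_Icc] at hi hj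
  simp only [volterra_derivP, volterra_derivQ]
  rw [Finset.sum_sub_distrib]
  have e1 : ∀ k ∈ Finset.Icc 1 (2 * n - 1),
      volterraU q p i * ((if i + 1 = k then (1:ℝ) else 0) - (if i - 1 = k then (1:ℝ) else 0)) / 2
        * (if j = k then volterraU q p j else 0)
      = if j = k then
          volterraU q p i * ((if i + 1 = k then (1:ℝ) else 0) - (if i - 1 = k then (1:ℝ) else 0)) / 2
            * volterraU q p j else 0 := by
    intro k _; split <;> simp
  have e2 : ∀ k ∈ Finset.Icc 1 (2 * n - 1),
      (if i = k then volterraU q p i else 0)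
        * (volterraU q p j * ((if j + 1 = k then (1:ℝ) else 0) - (if j - 1 = k then (1:ℝ) else 0)) / 2)
      = if i = k then
          volterraU q p i
            * (volterraU q p j * ((if j + 1 = k then (1:ℝ) else 0) - (if j - 1 = k then (1:ℝ) else 0)) / 2)
          else 0 := by
    intro k _; split <;> simp
  rw [Finset.sum_congr rfl e1, Finset.sum_congr rfl e2,
    Finset.sum_ite_eq, Finset.sum_ite_eq]
  have hjmem : j ∈ Finset.Icc 1 (2 * n - 1) := Finset.mem_Icc.mpr hj
  have himem : i ∈ Finset.Icc 1 (2 * n - 1) := Finset.mem_Icc.mpr hi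
  rw [if_pos hjmem, if_pos himem]
  have hne1 : ¬ (i - 1 = j) := by omega
  have hne2 : ¬ (j + 1 = i) := by omega
  by_cases hcase : j = i + 1
  · have h3 : i + 1 = j := hcase.symm
    have h4 : j - 1 = i := by omega
    simp only [if_pos h3, if_neg hne1, if_neg hne2, if_pos h4, if_pos hcase]
    ring
  · have h3 : ¬ (i + 1 = j) := fun h => hcase h.symm
    have h4 : ¬ (j - 1 = i) := by omega
    simp only [if_neg h3, if_neg hne1, if_neg hne2, if_neg h4, if_neg hcase]
    ring
end

section
/- The pullback h_1 = H_1 ∘ Ψ of H_1(u) = Σ u_i under the Volterra map equals Σ_{i=1}^{2n-1} exp(p_i + (1/2)(q_{i+1} - q_{i-1})), and h_1 Poisson-commutes with h_2 = (1/2)Σ_{i=1}^{2n-1} exp(2p_i + q_{i+1} - q_{i-1}) + Σ_{i=1}^{2n-2} exp(p_i + p_{i+1} + (1/2)(q_{i+2} + q_{i+1} - q_i - q_{i-1})) with respect to the canonical bracket on ℝ^{2(2n-1)}: {h_1, h_2} = 0. -/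
/-- `h₁(q,p) = ∑_{i=1}^{2n-1} exp(pᵢ + (1/2)(qᵢ₊₁ - qᵢ₋₁))`. -/
noncomputable def h1Ham (n : ℕ) (q p : ℕ → ℝ) : ℝ :=
  ∑ i ∈ Finset.Icc 1 (2 * n - 1), Real.exp (p i + (q (i + 1) - q (i - 1)) / 2)

/-- `h₂ = (1/2)∑ᵢ exp(2pᵢ + qᵢ₊₁ - qᵢ₋₁) + ∑ᵢ exp(pᵢ + pᵢ₊₁ + (1/2)(qᵢ₊₂ + qᵢ₊₁ - qᵢ - qᵢ₋₁))`. -/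
noncomputable def h2Ham (n : ℕ) (q p : ℕ → ℝ) : ℝ :=
  (1 / 2) * ∑ i ∈ Finset.Icc 1 (2 * n - 1), Real.exp (2 * p i + q (i + 1) - q (i - 1))
  + ∑ i ∈ Finset.Icc 1 (2 * n - 2),
      Real.exp (p i + p (i + 1) + (q (i + 2) + q (i + 1) - q i - q (i - 1)) / 2)

/-! In the Volterra variables `uᵢ = exp(pᵢ + (qᵢ₊₁ - qᵢ₋₁)/2)`, extended by `u₀ = u_{N+1} = 0`,
one has `∂uᵢ/∂pₖ = δᵢₖ uᵢ` and `∂uᵢ/∂qₖ = (δᵢ₊₁,ₖ - δᵢ₋₁,ₖ) uᵢ / 2`. Since `h₁ = Σ uᵢ` and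
`h₂ = ½ Σ uᵢ² + Σ uᵢ uᵢ₊₁`, whose gradient in `u` is `Sᵢ = uᵢ₋₁ + uᵢ + uᵢ₊₁`, this gives
`∂h₁/∂pₖ = uₖ`, `∂h₁/∂qₖ = (uₖ₋₁ - uₖ₊₁)/2`, `∂h₂/∂pₖ = uₖ Sₖ` and
`∂h₂/∂qₖ = (uₖ₋₁ Sₖ₋₁ - uₖ₊₁ Sₖ₊₁)/2`. The `k`-th term of `{h₁, h₂}` is then `(Tₖ - Tₖ₋₂)/2`
with `Tⱼ = uⱼ uⱼ₊₁ uⱼ₊₂`, and the sum telescopes to boundary terms, which vanish. -/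

open Finset Function

lemma Finset.sum_Icc_eq_sum_range_ite {M : Type*} [AddCommMonoid M] (f : ℕ → M) {m N : ℕ}
    (h : m < N) : ∑ i ∈ Icc 1 m, f i = ∑ i ∈ range N, if i ∈ Icc 1 m then f i else 0 := by
  rw [sum_ite_mem, inter_eq_right.mpr]
  intro i hi
  simp only [mem_Icc, mem_range] at hi ⊢
  omega

lemma sum_range_mul_ite_eq (g : ℕ → ℝ) {M k : ℕ} (hk : k < M) :
    ∑ i ∈ range M, g i * (if i = k then 1 else 0) = g k := by
  simp [hk]

lemma sum_range_mul_ite_sub_ite (g : ℕ → ℝ) {M k : ℕ} (hk : k ∈ Icc 1 (M - 2)) :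
    ∑ i ∈ range M, g i * (((if i + 1 = k then 1 else 0) - if i = k + 1 then 1 else 0) / 2)
      = (g (k - 1) - g (k + 1)) / 2 := by
  obtain ⟨j, rfl⟩ : ∃ j, k = j + 1 := ⟨k - 1, by simp only [mem_Icc] at hk; omega⟩
  simp only [mem_Icc] at hk
  simp [mul_sub, mul_div_assoc', ← sum_div, sum_sub_distrib, show j < M by omega,
    show j + 2 < M by omega]

lemma sum_Icc_sub_sub_two (T : ℕ → ℝ) (h0 : T 0 = 0) (m : ℕ) :
    ∑ k ∈ Icc 1 m, (T k - T (k - 2)) = T m + T (m - 1) := by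
  induction m with
  | zero => simp [h0]
  | succ m ih =>
    rw [sum_Icc_succ_top (by omega), ih, show m + 1 - 2 = m - 1 by omega, Nat.add_sub_cancel]
    ring

lemma hasDerivAt_update_apply (f : ℕ → ℝ) (k j : ℕ) (x : ℝ) :
    HasDerivAt (fun y => update f k y j) (if j = k then 1 else 0) x := by
  by_cases h : j = k
  · subst h
    simpa using hasDerivAt_id' x
  · simpa [update_of_ne h, h] using hasDerivAt_const x (f j)

lemma hasDerivAt_half_sum_sq_add_sum_mul_succ {f : ℕ → ℝ → ℝ} {c : ℕ → ℝ} {x : ℝ} {M : ℕ}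
    (hf : ∀ i, HasDerivAt (f i) (f i x * c i) x) (h0 : f 0 x = 0) (hM : f M x = 0) :
    HasDerivAt (fun y => 1 / 2 * ∑ i ∈ range M, f i y ^ 2 + ∑ i ∈ range M, f i y * f (i + 1) y)
      (∑ i ∈ range M, f i x * (f (i - 1) x + f i x + f (i + 1) x) * c i) x := by
  have shift : ∑ i ∈ range M, f i x * (f (i + 1) x * c (i + 1))
      = ∑ i ∈ range M, f (i - 1) x * f i x * c i := by
    cases M with
    | zero => simp
    | succ M =>
      rw [sum_range_succ, sum_range_succ' (fun i => f (i - 1) x * f i x * c i), hM, h0]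
      simp [mul_assoc]
  have H : HasDerivAt
      (fun y => 1 / 2 * ∑ i ∈ range M, f i y ^ 2 + ∑ i ∈ range M, f i y * f (i + 1) y)
      (1 / 2 * ∑ i ∈ range M, 2 * f i x * (f i x * c i)
        + ∑ i ∈ range M, (f i x * c i * f (i + 1) x + f i x * (f (i + 1) x * c (i + 1)))) x := by
    refine ((HasDerivAt.fun_sum fun i _ => ?_).const_mul _).add
      (HasDerivAt.fun_sum fun i _ => (hf i).fun_mul (hf (i + 1)))
    simpa using (hf i).fun_pow 2
  refine H.congr_deriv ?_
  rw [sum_add_distrib, shift, mul_sum, ← sum_add_distrib, ← sum_add_distrib]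
  refine sum_congr rfl fun i _ => ?_
  ring

lemma volterra_bracket_sum_eq_zero (a : ℕ → ℝ) (N : ℕ) (h0 : a 0 = 0) (hN : a (N + 1) = 0) :
    ∑ k ∈ Icc 1 N, ((a (k - 1) - a (k + 1)) / 2 * (a k * (a (k - 1) + a k + a (k + 1)))
        - a k * ((a (k - 1) * (a (k - 1 - 1) + a (k - 1) + a (k - 1 + 1))
          - a (k + 1) * (a (k + 1 - 1) + a (k + 1) + a (k + 1 + 1))) / 2)) = 0 := by
  set T : ℕ → ℝ := fun j => a j * a (j + 1) * a (j + 2) with hT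
  calc _ = ∑ k ∈ Icc 1 N, (T k - T (k - 2)) / 2 := by
        refine sum_congr rfl fun k hk => ?_
        obtain ⟨j, rfl⟩ : ∃ j, k = j + 1 := ⟨k - 1, by simp only [mem_Icc] at hk; omega⟩
        cases j with
        | zero =>
          simp only [hT, h0]
          ring
        | succ j =>
          simp only [hT, Nat.add_sub_cancel, show j + 1 + 1 - 2 = j by omega]
          ring
    _ = (T N + T (N - 1)) / 2 := by rw [← sum_div, sum_Icc_sub_sub_two T (by simp [hT, h0])]
    _ = 0 := by
        cases N with
        | zero => simp [hT, h0]
        | succ N => simp [hT, hN]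

lemma hasDerivAt_volterraU_update_p (q p : ℕ → ℝ) (k i : ℕ) (x : ℝ) :
    HasDerivAt (fun y => volterraU q (update p k y) i)
      (volterraU q (update p k x) i * if i = k then 1 else 0) x :=
  ((hasDerivAt_update_apply p k i x).add_const ((q (i + 1) - q (i - 1)) / 2)).exp

lemma hasDerivAt_volterraU_update_q (q p : ℕ → ℝ) (k i : ℕ) (x : ℝ) :
    HasDerivAt (fun y => volterraU (update q k y) p i)
      (volterraU (update q k x) p i
        * (((if i + 1 = k then 1 else 0) - if i - 1 = k then 1 else 0) / 2)) x :=
  ((((hasDerivAt_update_apply q k (i + 1) x).sub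
    (hasDerivAt_update_apply q k (i - 1) x)).div_const 2).const_add (p i)).exp

noncomputable def volterraTrunc (N : ℕ) (q p : ℕ → ℝ) (i : ℕ) : ℝ :=
  if i ∈ Icc 1 N then volterraU q p i else 0

section volterraTrunc

variable (N : ℕ) (q p : ℕ → ℝ)

lemma volterraTrunc_zero : volterraTrunc N q p 0 = 0 := by
  simp [volterraTrunc]

lemma volterraTrunc_of_lt {i : ℕ} (hi : N < i) : volterraTrunc N q p i = 0 := by
  simp [volterraTrunc, hi.not_ge]

lemma hasDerivAt_volterraTrunc_update_p (k : ℕ) (x : ℝ) (i : ℕ) :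
    HasDerivAt (fun y => volterraTrunc N q (update p k y) i)
      (volterraTrunc N q (update p k x) i * if i = k then 1 else 0) x := by
  by_cases hi : i ∈ Icc 1 N
  · simpa only [volterraTrunc, if_pos hi] using hasDerivAt_volterraU_update_p q p k i x
  · simpa only [volterraTrunc, if_neg hi, zero_mul] using hasDerivAt_const x (0 : ℝ)

lemma hasDerivAt_volterraTrunc_update_q (k : ℕ) (x : ℝ) (i : ℕ) :
    HasDerivAt (fun y => volterraTrunc N (update q k y) p i)
      (volterraTrunc N (update q k x) p i
        * (((if i + 1 = k then 1 else 0) - if i = k + 1 then 1 else 0) / 2)) x := by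
  by_cases hi : i ∈ Icc 1 N
  · have hik : (i - 1 = k) = (i = k + 1) := propext (by simp only [mem_Icc] at hi; omega)
    simpa only [volterraTrunc, if_pos hi, hik] using hasDerivAt_volterraU_update_q q p k i x
  · simpa only [volterraTrunc, if_neg hi, zero_mul] using hasDerivAt_const x (0 : ℝ)

lemma volterraTrunc_sq (i : ℕ) :
    volterraTrunc N q p i ^ 2
      = if i ∈ Icc 1 N then Real.exp (2 * p i + q (i + 1) - q (i - 1)) else 0 := by
  unfold volterraTrunc volterraU
  split_ifs
  · rw [← Real.exp_nat_mul]
    ring_nf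
  · simp

lemma volterraTrunc_mul_volterraTrunc_succ (i : ℕ) :
    volterraTrunc N q p i * volterraTrunc N q p (i + 1)
      = if i ∈ Icc 1 (N - 1) then
          Real.exp (p i + p (i + 1) + (q (i + 2) + q (i + 1) - q i - q (i - 1)) / 2) else 0 := by
  unfold volterraTrunc volterraU
  by_cases hi : i ∈ Icc 1 (N - 1)
  · simp only [mem_Icc] at hi
    rw [if_pos (mem_Icc.mpr ⟨hi.1, by omega⟩), if_pos (mem_Icc.mpr ⟨by omega, by omega⟩),
      if_pos (mem_Icc.mpr hi), ← Real.exp_add, Nat.add_sub_cancel, add_assoc i 1 1]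
    ring_nf
  · rw [if_neg hi]
    simp only [mem_Icc] at hi ⊢
    split_ifs <;> first | omega | simp

end volterraTrunc

lemma h1Ham_eq_sum_volterraTrunc (n : ℕ) (q p : ℕ → ℝ) :
    h1Ham n q p = ∑ i ∈ range (2 * n - 1 + 2), volterraTrunc (2 * n - 1) q p i :=
  sum_Icc_eq_sum_range_ite _ (by omega)

lemma h2Ham_eq_sum_volterraTrunc (n : ℕ) (q p : ℕ → ℝ) :
    h2Ham n q p = 1 / 2 * ∑ i ∈ range (2 * n - 1 + 2), volterraTrunc (2 * n - 1) q p i ^ 2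
      + ∑ i ∈ range (2 * n - 1 + 2),
          volterraTrunc (2 * n - 1) q p i * volterraTrunc (2 * n - 1) q p (i + 1) := by
  simp only [volterraTrunc_sq, volterraTrunc_mul_volterraTrunc_succ, h2Ham,
    show 2 * n - 2 = 2 * n - 1 - 1 by omega]
  rw [← sum_Icc_eq_sum_range_ite _ (by omega), ← sum_Icc_eq_sum_range_ite _ (by omega)]

section derivatives

variable (n : ℕ) (q p : ℕ → ℝ)

local notation "a" => volterraTrunc (2 * n - 1) q p

lemma deriv_h1Ham_update_q {k : ℕ} (hk : k ∈ Icc 1 (2 * n - 1)) :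
    deriv (fun x => h1Ham n (update q k x) p) (q k) = (a (k - 1) - a (k + 1)) / 2 := by
  simp only [h1Ham_eq_sum_volterraTrunc]
  rw [(HasDerivAt.fun_sum fun i _ => hasDerivAt_volterraTrunc_update_q _ q p k (q k) i).deriv,
    update_eq_self]
  exact sum_range_mul_ite_sub_ite _ (by simpa using hk)

lemma deriv_h1Ham_update_p {k : ℕ} (hk : k ∈ Icc 1 (2 * n - 1)) :
    deriv (fun x => h1Ham n q (update p k x)) (p k) = a k := by
  simp only [h1Ham_eq_sum_volterraTrunc]
  rw [(HasDerivAt.fun_sum fun i _ => hasDerivAt_volterraTrunc_update_p _ q p k (p k) i).deriv,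
    update_eq_self]
  exact sum_range_mul_ite_eq _ (by simp only [mem_Icc] at hk; omega)

lemma deriv_h2Ham_update_q {k : ℕ} (hk : k ∈ Icc 1 (2 * n - 1)) :
    deriv (fun x => h2Ham n (update q k x) p) (q k)
      = (a (k - 1) * (a (k - 1 - 1) + a (k - 1) + a (k - 1 + 1))
          - a (k + 1) * (a (k + 1 - 1) + a (k + 1) + a (k + 1 + 1))) / 2 := by
  simp only [h2Ham_eq_sum_volterraTrunc]
  rw [(hasDerivAt_half_sum_sq_add_sum_mul_succ (hasDerivAt_volterraTrunc_update_q _ q p k (q k))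
    (volterraTrunc_zero ..) (volterraTrunc_of_lt _ _ _ (by omega))).deriv, update_eq_self]
  exact sum_range_mul_ite_sub_ite (fun i => a i * (a (i - 1) + a i + a (i + 1))) (by simpa using hk)

lemma deriv_h2Ham_update_p {k : ℕ} (hk : k ∈ Icc 1 (2 * n - 1)) :
    deriv (fun x => h2Ham n q (update p k x)) (p k) = a k * (a (k - 1) + a k + a (k + 1)) := by
  simp only [h2Ham_eq_sum_volterraTrunc]
  rw [(hasDerivAt_half_sum_sq_add_sum_mul_succ (hasDerivAt_volterraTrunc_update_p _ q p k (p k))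
    (volterraTrunc_zero ..) (volterraTrunc_of_lt _ _ _ (by omega))).deriv, update_eq_self]
  exact sum_range_mul_ite_eq (fun i => a i * (a (i - 1) + a i + a (i + 1)))
    (by simp only [mem_Icc] at hk; omega)

end derivatives

theorem h1_pullback_and_commutes_with_h2_general (n : ℕ) (q p : ℕ → ℝ) :
    (∑ i ∈ Finset.Icc 1 (2 * n - 1), volterraU q p i) = h1Ham n q p ∧
    ∑ k ∈ Finset.Icc 1 (2 * n - 1),
        (deriv (fun x => h1Ham n (Function.update q k x) p) (q k)
            * deriv (fun x => h2Ham n q (Function.update p k x)) (p k)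
          - deriv (fun x => h1Ham n q (Function.update p k x)) (p k)
            * deriv (fun x => h2Ham n (Function.update q k x) p) (q k))
      = 0 := by
  refine ⟨rfl, ?_⟩
  rw [sum_congr rfl fun k hk => by
    rw [deriv_h1Ham_update_q n q p hk, deriv_h2Ham_update_p n q p hk,
      deriv_h1Ham_update_p n q p hk, deriv_h2Ham_update_q n q p hk]]
  exact volterra_bracket_sum_eq_zero _ _ (volterraTrunc_zero ..)
    (volterraTrunc_of_lt _ _ _ (by omega))

/-- The pullback `h₁ = H₁ ∘ Ψ` of `H₁(u) = ∑ uᵢ` under the Volterra map equals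
`∑ᵢ exp(pᵢ + (1/2)(qᵢ₊₁ - qᵢ₋₁))`, and `h₁` Poisson-commutes with `h₂` with respect
to the canonical bracket on `ℝ^{2(2n-1)}`: `{h₁, h₂} = 0`. -/
theorem h1_pullback_and_commutes_with_h2 (n : ℕ) (hn : 0 < n) (q p : ℕ → ℝ)
    (hq0 : q 0 = 0) (hq2n : q (2 * n) = 0) :
    (∑ i ∈ Finset.Icc 1 (2 * n - 1), volterraU q p i) = h1Ham n q p ∧
    ∑ k ∈ Finset.Icc 1 (2 * n - 1),
        (deriv (fun x => h1Ham n (Function.update q k x) p) (q k)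
            * deriv (fun x => h2Ham n q (Function.update p k x)) (p k)
          - deriv (fun x => h1Ham n q (Function.update p k x)) (p k)
            * deriv (fun x => h2Ham n (Function.update q k x) p) (q k))
      = 0 :=
  h1_pullback_and_commutes_with_h2_general n q p
end
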